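/- Let S be an invertible symmetric d×d real matrix, let G be a closed nonempty S-monotone set in ℝ^d, and assume D := int(dom ψ_G) ≠ ∅. Then: range(S^{-1}∇ψ_G) ⊂ G; dom P_G = dom ∂^S ψ_G = dom ∂̄^S ψ_G; ψ_G(x) = ψ_G*(Sx) = ½S(x,x) for every x ∈ G; and P_G(x) = ∂^S ψ_G(x) ∩ G for every x ∈ ℝ^d. -/

import Mathlib

open Filter Topology Set Pointwise
open scoped RealInnerProductSpace

noncomputable section

abbrev Euc (d : ℕ) := EuclideanSpace ℝ (Fin d)

/-- A proper lower-semicontinuous (closed) convex function with values in `ℝ ∪ {+∞}`. -/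
def ClosedConvexFun {d : ℕ} (f : Euc d → EReal) : Prop :=
  LowerSemicontinuous f ∧ (∀ x, f x ≠ ⊥) ∧ (∃ x, f x ≠ ⊤) ∧
    ∀ x y : Euc d, ∀ a b : ℝ, 0 ≤ a → 0 ≤ b → a + b = 1 →
      f (a • x + b • y) ≤ (a : EReal) * f x + (b : EReal) * f y

/-- Subdifferential of an `EReal`-valued function. -/
def subdiff {d : ℕ} (f : Euc d → EReal) (x : Euc d) : Set (Euc d) :=
  {y | ∀ z : Euc d, ((⟪z, y⟫ : ℝ) : EReal) + f x ≤ f (x + z)}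

/-- Convex conjugate. -/
def fconj {d : ℕ} (f : Euc d → EReal) (y : Euc d) : EReal :=
  ⨆ x : Euc d, ((⟪x, y⟫ : ℝ) : EReal) - f x

/-- The function `f_A(x) = sup_{y ∈ A} (⟨x,y⟩ - f*(y))`. -/
def restrSup {d : ℕ} (f : Euc d → EReal) (A : Set (Euc d)) (x : Euc d) : EReal :=
  ⨆ y ∈ A, (((⟪x, y⟫ : ℝ) : EReal) - fconj f y)

/-- `Arg_A(x) = argmax_{y ∈ A} (⟨x,y⟩ - f*(y))`. -/
def argMaxOn {d : ℕ} (f : Euc d → EReal) (A : Set (Euc d)) (x : Euc d) : Set (Euc d) :=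
  {y ∈ A | ∀ z ∈ A, ((⟪x, z⟫ : ℝ) : EReal) - fconj f z ≤ ((⟪x, y⟫ : ℝ) : EReal) - fconj f y}

/-- Linear growth: `|g x| ≤ K (1 + |x|)`. -/
def LinGrowth {k : ℕ} (g : Euc k → ℝ) : Prop :=
  ∃ K > 0, ∀ x, |g x| ≤ K * (1 + ‖x‖)

/-- `x^{-j}`: delete the `j`-th coordinate. -/
def dropCoord {d : ℕ} (j : Fin (d + 1)) (x : Euc (d + 1)) : Euc d :=
  WithLp.toLp 2 (fun i => x (j.succAbove i))

/-- The class `H^j_C`. -/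
def MemH {d : ℕ} (j : Fin (d + 1)) (C : Set (Euc (d + 1))) (h : Euc (d + 1) → ℝ) : Prop :=
  ∃ g₁ g₂ : Euc d → ℝ, ConvexOn ℝ Set.univ g₁ ∧ ConvexOn ℝ Set.univ g₂ ∧
    LinGrowth g₁ ∧ LinGrowth g₂ ∧
    (∀ x : Euc (d + 1), h x = x j + g₁ (dropCoord j x) - g₂ (dropCoord j x)) ∧
    ∀ x : Euc (d + 1), DifferentiableAt ℝ g₁ (dropCoord j x) →
      DifferentiableAt ℝ g₂ (dropCoord j x) → gradient h x ∈ C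

/-- `θ^j(C) = {y / y^j : y ∈ C}`. -/
def theta {d : ℕ} (j : Fin d) (C : Set (Euc d)) : Set (Euc d) :=
  (fun y => (y j)⁻¹ • y) '' C

/-- `w` is a regular normal to `H` at `x`: `limsup_{H ∋ y → x} ⟨w, y-x⟩/|y-x| ≤ 0`. -/
def RegNormal {d : ℕ} (H : Set (Euc d)) (x w : Euc d) : Prop :=
  ∀ ε > 0, ∃ δ > 0, ∀ y ∈ H, y ≠ x → ‖y - x‖ < δ → ⟪w, y - x⟫ ≤ ε * ‖y - x‖

/-- `w` is a normal vector to `H` at `x`. -/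
def NormalVec {d : ℕ} (H : Set (Euc d)) (x w : Euc d) : Prop :=
  ∃ xs ws : ℕ → Euc d, (∀ n, xs n ∈ H ∧ RegNormal H (xs n) (ws n)) ∧
    Tendsto xs atTop (𝓝 x) ∧ Tendsto ws atTop (𝓝 w)

/-- Effective domain `{x | f x < ∞}`. -/
def effDom {d : ℕ} (f : Euc d → EReal) : Set (Euc d) := {x | f x ≠ ⊤}

/-- Real part of an `EReal`-valued function. -/
def toRealFun {d : ℕ} (f : Euc d → EReal) : Euc d → ℝ := fun x => (f x).toReal

/-- Points of `int (dom f)` where `f` is differentiable. -/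
def domGrad {d : ℕ} (f : Euc d → EReal) : Set (Euc d) :=
  {x | x ∈ interior (effDom f) ∧ DifferentiableAt ℝ (toRealFun f) x}

/-- `range ∇f`. -/
def gradRange {d : ℕ} (f : Euc d → EReal) : Set (Euc d) :=
  (fun x => gradient (toRealFun f) x) '' domGrad f

/-- Clarke-type subdifferential `∂̄f(x)`. -/
def clarke {d : ℕ} (f : Euc d → EReal) (x : Euc d) : Set (Euc d) :=
  closure (convexHull ℝ
    {v | ∃ xs : ℕ → Euc d, (∀ n, xs n ∈ domGrad f) ∧ Tendsto xs atTop (𝓝 x) ∧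
      Tendsto (fun n => gradient (toRealFun f) (xs n)) atTop (𝓝 v)})

/-- Singular set `Σ^j_A(Ψ)`. -/
def SigmaJ {d : ℕ} (Ψ : Euc d → Set (Euc d)) (j : Fin d) (A : Set (Euc d)) : Set (Euc d) :=
  {x | ∃ y₁ ∈ Ψ x ∩ A, ∃ y₂ ∈ Ψ x ∩ A, y₁ j ≠ y₂ j}

/-- The bilinear form `S(x,y) = ∑ x^i S^{ij} y^j`. -/
def Sbil {d : ℕ} (S : Matrix (Fin d) (Fin d) ℝ) (x y : Euc d) : ℝ :=
  ∑ i, ∑ k, x i * S i k * y k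

/-- Matrix acting on a vector. -/
def matVec {d : ℕ} (M : Matrix (Fin d) (Fin d) ℝ) (y : Euc d) : Euc d :=
  WithLp.toLp 2 (fun i => ∑ k, M i k * y k)

/-- Fitzpatrick function `ψ_G(x) = sup_{y ∈ G}(S(x,y) - S(y,y)/2)`. -/
def fitz {d : ℕ} (S : Matrix (Fin d) (Fin d) ℝ) (G : Set (Euc d)) (x : Euc d) : EReal :=
  ⨆ y ∈ G, ((Sbil S x y - Sbil S y y / 2 : ℝ) : EReal)

/-- `S`-monotone set. -/
def SMonotone {d : ℕ} (S : Matrix (Fin d) (Fin d) ℝ) (G : Set (Euc d)) : Prop :=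
  ∀ x ∈ G, ∀ y ∈ G, 0 ≤ Sbil S (x - y) (x - y)

/-- Projection `P_G(x) = argmin_{y ∈ G} S(x-y, x-y)`. -/
def proj {d : ℕ} (S : Matrix (Fin d) (Fin d) ℝ) (G : Set (Euc d)) (x : Euc d) : Set (Euc d) :=
  {y ∈ G | ∀ z ∈ G, Sbil S (x - y) (x - y) ≤ Sbil S (x - z) (x - z)}

/-- `S`-regular normal vector. -/
def SRegNormal {d : ℕ} (S : Matrix (Fin d) (Fin d) ℝ) (H : Set (Euc d)) (x w : Euc d) : Prop :=
  ∀ ε > 0, ∃ δ > 0, ∀ y ∈ H, y ≠ x → ‖y - x‖ < δ → Sbil S w (y - x) ≤ ε * ‖y - x‖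

/-- `S`-normal vector. -/
def SNormal {d : ℕ} (S : Matrix (Fin d) (Fin d) ℝ) (H : Set (Euc d)) (x w : Euc d) : Prop :=
  ∃ xs ws : ℕ → Euc d, (∀ n, xs n ∈ H ∧ SRegNormal S H (xs n) (ws n)) ∧
    Tendsto xs atTop (𝓝 x) ∧ Tendsto ws atTop (𝓝 w)

/-- First-order singular set `Σ₁^j(P_G)`. -/
def Sigma1J {d : ℕ} (S : Matrix (Fin d) (Fin d) ℝ) (G : Set (Euc d)) (j : Fin d) :
    Set (Euc d) :=
  {x | ∃ y₁ ∈ proj S G x, ∃ y₂ ∈ proj S G x,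
    0 < Sbil S (y₁ - y₂) (y₁ - y₂) ∧ y₁ j ≠ y₂ j}

/-- Zero-order singular set `Σ̄₀^j(P_G)`. -/
def Sigma0J {d : ℕ} (S : Matrix (Fin d) (Fin d) ℝ) (G : Set (Euc d)) (j : Fin d) :
    Set (Euc d) :=
  {x | ∃ y₁ ∈ proj S G x, ∃ y₂ ∈ proj S G x,
    Sbil S (y₁ - y₂) (y₁ - y₂) = 0 ∧ y₁ j ≠ y₂ j}

/-- The canonical bilinear form of index `m` on `ℝ^m × ℝ^k`. -/
def Lam {m k : ℕ} (p q : Euc m × Euc k) : ℝ := ⟪p.1, q.1⟫ - ⟪p.2, q.2⟫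

/-!
`fitz S G` is the supremum of the affine functions `fitzAffine S y`, `y ∈ G`, and `proj S G x`
is the set of `y ∈ G` at which this supremum is attained at `x`; such a `y` is exactly one for
which `S y` is a subgradient at `x`. `S`-monotonicity says `fitzAffine S y x ≤ ½ S(x,x)` on `G`,
with equality for `y = x`. At an interior point of the domain the near-maximizers form a compact
set, so the supremum is attained, and at a point of differentiability the gradient, being the
only subgradient, lies in `S '' G`. Finally a point with a subgradient is a limit of points of
differentiability with bounded gradients (taken in shrinking balls along a segment towards an
interior point), and limits of gradients are subgradients by lower semicontinuity; since `G` is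
closed, the limit also lies in `S '' G`.
-/

open Metric

section InnerProductSpace

variable {E : Type*} [NormedAddCommGroup E] [InnerProductSpace ℝ E]

theorem mul_norm_le_of_forall_inner_le {ρ B : ℝ} {g : E} (hρ : 0 ≤ ρ)
    (h : ∀ ζ : E, ‖ζ‖ ≤ ρ → ⟪ζ, g⟫ ≤ B) : ρ * ‖g‖ ≤ B := by
  rcases eq_or_ne g 0 with rfl | hg
  · simpa using h 0 (by simpa using hρ)
  have hgpos : 0 < ‖g‖ := norm_pos_iff.2 hg
  calc ρ * ‖g‖ = ⟪(ρ / ‖g‖) • g, g⟫ := by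
        rw [real_inner_smul_left, real_inner_self_eq_norm_sq]
        field_simp
    _ ≤ B := h _ <| by
        rw [norm_smul, Real.norm_of_nonneg (by positivity), div_mul_cancel₀ _ hgpos.ne']

variable [CompleteSpace E] {s : Set E} {f : E → ℝ} {u p w : E}

theorem eq_of_hasGradientAt_of_eventually_le {x g : E} (hg : HasGradientAt f g x)
    (hw : ∀ᶠ y in 𝓝 x, ⟪y - x, w⟫ + f x ≤ f y) : w = g := by
  have hmin : IsLocalMin (fun y => f y - ⟪w, y - x⟫) x := by
    filter_upwards [hw] with y hy
    rw [real_inner_comm] at hy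
    simp only [sub_self, inner_zero_right, sub_zero]
    linarith
  have hderiv := (hasGradientAt_iff_hasFDerivAt.1 hg).sub
    ((innerSL ℝ w).hasFDerivAt.comp x ((hasFDerivAt_id x).sub_const x))
  have h0 := hmin.hasFDerivAt_eq_zero hderiv
  refine ext_inner_right ℝ fun v => ?_
  have := DFunLike.congr_fun h0 v
  simp only [ContinuousLinearMap.comp_id, sub_apply,
    InnerProductSpace.toDual_apply_apply, innerSL_apply_apply, zero_apply] at this
  linarith

theorem ConvexOn.inner_add_le_of_hasGradientAt (hf : ConvexOn ℝ s f) (hu : u ∈ s) (hp : p ∈ s)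
    (hw : HasGradientAt f w u) : ⟪p - u, w⟫ + f u ≤ f p := by
  have hg : ConvexOn ℝ (AffineMap.lineMap u p ⁻¹' s) (f ∘ AffineMap.lineMap u p) :=
    hf.comp_affineMap _
  have hderiv : HasDerivAt (f ∘ AffineMap.lineMap u p) ⟪w, p - u⟫ (0 : ℝ) := by
    have h := hasGradientAt_iff_hasFDerivAt.1 hw
    rw [← AffineMap.lineMap_apply_zero u p (k := ℝ)] at h
    simpa using h.comp_hasDerivAt (0 : ℝ) AffineMap.hasDerivAt_lineMap
  have := hg.le_slope_of_hasDerivAt (by simpa using hu) (by simpa using hp) zero_lt_one hderiv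
  simp only [slope_def_field, Function.comp_apply, AffineMap.lineMap_apply_one,
    AffineMap.lineMap_apply_zero, sub_zero, div_one] at this
  rw [real_inner_comm]
  linarith

theorem ConvexOn.mul_norm_le_of_hasGradientAt (hf : ConvexOn ℝ s f) {ρ B : ℝ} (hρ : 0 ≤ ρ)
    (hball : closedBall u ρ ⊆ s) (hB : ∀ v ∈ closedBall u ρ, f v ≤ B)
    (hw : HasGradientAt f w u) : ρ * ‖w‖ ≤ B - f u :=
  mul_norm_le_of_forall_inner_le hρ fun ζ hζ => by
    have hmem : u + ζ ∈ closedBall u ρ := by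
      rwa [mem_closedBall, dist_eq_norm, add_sub_cancel_left]
    have := hf.inner_add_le_of_hasGradientAt (hball (mem_closedBall_self hρ)) (hball hmem) hw
    rw [add_sub_cancel_left] at this
    linarith [hB _ hmem]

end InnerProductSpace

section NormedSpace

variable {E : Type*} [NormedAddCommGroup E] [NormedSpace ℝ E] {s : Set E} {f : E → ℝ}

theorem ConvexOn.forall_closedBall_le_of_closedBall_le (hf : ConvexOn ℝ s f) {x x₀ : E}
    {r M t : ℝ} (hx : x ∈ s) (hball : closedBall x₀ r ⊆ interior s)
    (hM : ∀ b ∈ closedBall x₀ r, f b ≤ M) (ht0 : 0 < t) (ht1 : t ≤ 1) :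
    ∀ v ∈ closedBall (x + t • (x₀ - x)) (t * r), v ∈ interior s ∧ f v ≤ t * M + (1 - t) * f x := by
  intro v hv
  set b := x₀ + t⁻¹ • (v - (x + t • (x₀ - x)))
  have hb : b ∈ closedBall x₀ r := by
    rw [mem_closedBall, dist_eq_norm, add_sub_cancel_left, norm_smul, norm_inv,
      Real.norm_of_nonneg ht0.le, inv_mul_le_iff₀ ht0, ← dist_eq_norm]
    exact hv
  have hv : v = t • b + (1 - t) • x := by
    simp only [b, smul_add, smul_smul, mul_inv_cancel₀ ht0.ne', one_smul]
    module
  rw [hv]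
  refine ⟨hf.1.combo_interior_closure_mem_interior (hball hb) (subset_closure hx) ht0
    (by linarith) (by ring), ?_⟩
  calc f (t • b + (1 - t) • x) ≤ t * f b + (1 - t) * f x :=
        hf.2 (interior_subset (hball hb)) hx ht0.le (by linarith) (by ring)
    _ ≤ t * M + (1 - t) * f x := by gcongr; exact hM b hb

variable [FiniteDimensional ℝ E] {z : E}

theorem ConvexOn.exists_forall_closedBall_le (hf : ConvexOn ℝ s f) (hz : z ∈ interior s) :
    ∃ r > 0, ∃ M, closedBall z r ⊆ interior s ∧ ∀ b ∈ closedBall z r, f b ≤ M := by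
  obtain ⟨r, hr, hball⟩ := isOpen_iff.1 isOpen_interior z hz
  have hsub : closedBall z (r / 2) ⊆ interior s :=
    (closedBall_subset_ball (by linarith)).trans hball
  obtain ⟨b, -, hb⟩ := (isCompact_closedBall z (r / 2)).exists_isMaxOn
    (nonempty_closedBall.2 (by linarith)) (hf.continuousOn_interior.mono hsub)
  exact ⟨r / 2, by linarith, f b, hsub, hb⟩

theorem ConvexOn.exists_differentiableAt_mem_ball (hf : ConvexOn ℝ s f) (hz : z ∈ interior s)
    {ρ : ℝ} (hρ : 0 < ρ) : ∃ u ∈ ball z ρ, u ∈ interior s ∧ DifferentiableAt ℝ f u := by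
  obtain ⟨K, t, ht, hlip⟩ := hf.locallyLipschitzOn_interior hz
  rw [nhdsWithin_eq_nhds.2 (isOpen_interior.mem_nhds hz)] at ht
  obtain ⟨r, hr, hball⟩ := Metric.mem_nhds_iff.1
    (inter_mem (inter_mem ht (isOpen_interior.mem_nhds hz)) (ball_mem_nhds z hρ))
  borelize E
  have hae := (hlip.mono fun y hy => (hball hy).1.1).ae_differentiableWithinAt_of_mem
    (μ := MeasureTheory.Measure.addHaar)
  obtain ⟨u, hu, hdiff⟩ := MeasureTheory.Measure.exists_mem_of_measure_ne_zero_of_ae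
    (measure_ball_pos _ z hr).ne' (MeasureTheory.ae_restrict_of_ae hae)
  exact ⟨u, (hball hu).2, (hball hu).1.2,
    (hdiff hu).differentiableAt (isOpen_ball.mem_nhds hu)⟩

end NormedSpace

section ERealConvex

variable {d : ℕ} {f : Euc d → EReal} {x w : Euc d}

theorem coe_toRealFun (hbot : ∀ x, f x ≠ ⊥) (hx : x ∈ effDom f) :
    ((toRealFun f x : ℝ) : EReal) = f x :=
  EReal.coe_toReal hx (hbot x)

theorem mem_subdiff_iff (hbot : ∀ x, f x ≠ ⊥) (hx : x ∈ effDom f) :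
    w ∈ subdiff f x ↔ ∀ p ∈ effDom f, ⟪p - x, w⟫ + toRealFun f x ≤ toRealFun f p := by
  constructor
  · intro hw p hp
    have := hw (p - x)
    rwa [add_sub_cancel, ← coe_toRealFun hbot hx, ← coe_toRealFun hbot hp, ← EReal.coe_add,
      EReal.coe_le_coe_iff] at this
  · intro h z
    by_cases hz : x + z ∈ effDom f
    · have := h _ hz
      rw [add_sub_cancel_left] at this
      rw [← coe_toRealFun hbot hx, ← coe_toRealFun hbot hz]
      exact_mod_cast this
    · rw [show f (x + z) = ⊤ by simpa [effDom] using hz]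
      exact le_top

theorem mem_effDom_of_mem_subdiff {p : Euc d} (hw : w ∈ subdiff f x) (hp : p ∈ effDom f) :
    x ∈ effDom f := fun htop => by
  have := hw (p - x)
  rw [htop, EReal.coe_add_top, add_sub_cancel, top_le_iff] at this
  exact hp this

theorem eq_gradient_of_mem_subdiff (hbot : ∀ x, f x ≠ ⊥) (hx : x ∈ domGrad f)
    (hw : w ∈ subdiff f x) : w = gradient (toRealFun f) x :=
  eq_of_hasGradientAt_of_eventually_le hx.2.hasGradientAt <| by
    filter_upwards [isOpen_interior.mem_nhds hx.1] with y hy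
    exact (mem_subdiff_iff hbot (interior_subset hx.1)).1 hw y (interior_subset hy)

theorem mem_subdiff_of_tendsto_gradient (hbot : ∀ x, f x ≠ ⊥)
    (hconv : ConvexOn ℝ (effDom f) (toRealFun f)) (hlsc : LowerSemicontinuous f)
    {u : ℕ → Euc d} {v : Euc d} (hu : ∀ n, u n ∈ domGrad f) (hux : Tendsto u atTop (𝓝 x))
    (hv : Tendsto (fun n => gradient (toRealFun f) (u n)) atTop (𝓝 v)) :
    v ∈ subdiff f x := by
  set F := toRealFun f
  have hbound : ∀ p ∈ effDom f, f x ≤ ((F p - ⟪p - x, v⟫ : ℝ) : EReal) := by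
    intro p hp
    have hle : ∀ n, f (u n) ≤ ((F p - ⟪p - u n, gradient F (u n)⟫ : ℝ) : EReal) := fun n => by
      rw [← coe_toRealFun hbot (interior_subset (hu n).1), EReal.coe_le_coe_iff]
      linarith [hconv.inner_add_le_of_hasGradientAt (interior_subset (hu n).1) hp
        (hu n).2.hasGradientAt]
    have hlim : Tendsto (fun n => ((F p - ⟪p - u n, gradient F (u n)⟫ : ℝ) : EReal)) atTop
        (𝓝 ((F p - ⟪p - x, v⟫ : ℝ) : EReal)) :=
      (continuous_coe_real_ereal.tendsto _).comp
        (tendsto_const_nhds.sub ((tendsto_const_nhds.sub hux).inner hv))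
    refine le_of_forall_lt_imp_le_of_dense fun y hy => ge_of_tendsto hlim ?_
    filter_upwards [hux.eventually (hlsc x y hy)] with n hn
    exact (hn.trans_le (hle n)).le
  have hx : x ∈ effDom f := fun htop => by
    have := hbound (u 0) (interior_subset (hu 0).1)
    rw [htop, top_le_iff] at this
    exact EReal.coe_ne_top _ this
  refine (mem_subdiff_iff hbot hx).2 fun p hp => ?_
  have := hbound p hp
  rw [← coe_toRealFun hbot hx, EReal.coe_le_coe_iff] at this
  linarith

theorem exists_mem_domGrad_near_of_mem_subdiff (hbot : ∀ x, f x ≠ ⊥)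
    (hconv : ConvexOn ℝ (effDom f) (toRealFun f)) (hw : w ∈ subdiff f x) (hx : x ∈ effDom f)
    {x₀ : Euc d} {r M t : ℝ} (hr : 0 < r) (hball : closedBall x₀ r ⊆ interior (effDom f))
    (hM : ∀ b ∈ closedBall x₀ r, toRealFun f b ≤ M) (ht0 : 0 < t) (ht1 : t ≤ 1) :
    ∃ u ∈ domGrad f, ‖u - x‖ ≤ t * (‖x₀ - x‖ + r) ∧
      r / 2 * ‖gradient (toRealFun f) u‖ ≤ M - toRealFun f x + ‖w‖ * (‖x₀ - x‖ + r) := by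
  -- On a ball of radius of order `t` about `x + t • (x₀ - x)`, convexity gives
  -- `f ≤ f x + t * (M - f x)` and the subgradient `w` gives `f ≥ f x - O(t)`,
  -- so the resulting gradient bound does not depend on `t`.
  set F := toRealFun f
  set xt := x + t • (x₀ - x)
  have hshrink := hconv.forall_closedBall_le_of_closedBall_le hx hball hM ht0 ht1
  obtain ⟨u, hu, huint, hudiff⟩ := hconv.exists_differentiableAt_mem_ball
    (hshrink xt (mem_closedBall_self (by positivity))).1 (half_pos (mul_pos ht0 hr))
  have hut : dist u xt < t * r / 2 := hu
  have hsub : closedBall u (t * r / 2) ⊆ closedBall xt (t * r) :=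
    closedBall_subset_closedBall' (by linarith)
  have hgrad := hconv.mul_norm_le_of_hasGradientAt (by positivity)
    (hsub.trans fun v hv => interior_subset (hshrink v hv).1) (fun v hv => (hshrink v (hsub hv)).2)
    hudiff.hasGradientAt
  have hlow := (mem_subdiff_iff hbot hx).1 hw u (interior_subset huint)
  have hux : ‖u - x‖ ≤ t * (‖x₀ - x‖ + r) :=
    calc ‖u - x‖ = ‖(u - xt) + t • (x₀ - x)‖ := by congr 1; simp only [xt]; abel
      _ ≤ ‖u - xt‖ + ‖t • (x₀ - x)‖ := norm_add_le _ _
      _ = dist u xt + t * ‖x₀ - x‖ := by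
        rw [dist_eq_norm, norm_smul, Real.norm_of_nonneg ht0.le]
      _ ≤ t * (‖x₀ - x‖ + r) := by linarith [mul_pos ht0 hr]
  have hinner : -(‖w‖ * (t * (‖x₀ - x‖ + r))) ≤ ⟪u - x, w⟫ :=
    calc -(‖w‖ * (t * (‖x₀ - x‖ + r))) ≤ -(‖u - x‖ * ‖w‖) := by
          rw [mul_comm]; gcongr
      _ ≤ ⟪u - x, w⟫ := neg_le_of_abs_le (abs_real_inner_le_norm _ _)
  refine ⟨u, ⟨huint, hudiff⟩, hux, le_of_mul_le_mul_left ?_ ht0⟩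
  linarith

theorem exists_tendsto_gradient_of_mem_subdiff (hbot : ∀ x, f x ≠ ⊥)
    (hconv : ConvexOn ℝ (effDom f) (toRealFun f)) (hD : (interior (effDom f)).Nonempty)
    (hw : w ∈ subdiff f x) :
    ∃ (u : ℕ → Euc d) (v : Euc d), (∀ n, u n ∈ domGrad f) ∧ Tendsto u atTop (𝓝 x) ∧
      Tendsto (fun n => gradient (toRealFun f) (u n)) atTop (𝓝 v) := by
  obtain ⟨x₀, hx₀⟩ := hD
  have hx : x ∈ effDom f := mem_effDom_of_mem_subdiff hw (interior_subset hx₀)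
  obtain ⟨r, hr, M, hball, hM⟩ := hconv.exists_forall_closedBall_le hx₀
  set L := ‖x₀ - x‖ + r
  set K := M - toRealFun f x + ‖w‖ * L
  have ht : ∀ n : ℕ, 0 < 1 / ((n : ℝ) + 1) ∧ 1 / ((n : ℝ) + 1) ≤ 1 := fun n =>
    ⟨by positivity, by rw [div_le_one (by positivity)]; simp⟩
  choose u hu hux hgrad using fun n : ℕ =>
    exists_mem_domGrad_near_of_mem_subdiff hbot hconv hw hx hr hball hM (ht n).1 (ht n).2
  have hbdd : ∀ n, gradient (toRealFun f) (u n) ∈ closedBall 0 (2 * K / r) := fun n => by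
    rw [mem_closedBall_zero_iff, le_div_iff₀ hr]
    linarith [hgrad n]
  obtain ⟨v, -, φ, hφ, hv⟩ := tendsto_subseq_of_bounded isBounded_closedBall hbdd
  refine ⟨u ∘ φ, v, fun n => hu _, ?_, hv⟩
  refine (tendsto_iff_norm_sub_tendsto_zero.2 ?_).comp hφ.tendsto_atTop
  refine squeeze_zero (fun n => norm_nonneg _) hux ?_
  simpa using tendsto_one_div_add_atTop_nhds_zero_nat.mul_const L

theorem clarke_nonempty_iff (hbot : ∀ x, f x ≠ ⊥) (hconv : ConvexOn ℝ (effDom f) (toRealFun f))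
    (hlsc : LowerSemicontinuous f) (hD : (interior (effDom f)).Nonempty) :
    (clarke f x).Nonempty ↔ (subdiff f x).Nonempty := by
  constructor
  · rintro ⟨_, hv⟩
    obtain ⟨v, u, hu, hux, hv⟩ := convexHull_nonempty_iff.1 (closure_nonempty_iff.1 ⟨_, hv⟩)
    exact ⟨v, mem_subdiff_of_tendsto_gradient hbot hconv hlsc hu hux hv⟩
  · rintro ⟨w, hw⟩
    obtain ⟨u, v, hu, hux, hv⟩ := exists_tendsto_gradient_of_mem_subdiff hbot hconv hD hw
    exact ⟨v, subset_closure (subset_convexHull ℝ _ ⟨u, hu, hux, hv⟩)⟩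

end ERealConvex

section Fitzpatrick

variable {d : ℕ} {S : Matrix (Fin d) (Fin d) ℝ} {G : Set (Euc d)} {x y : Euc d}

theorem matVec_eq_toEuclideanCLM (M : Matrix (Fin d) (Fin d) ℝ) :
    matVec M = Matrix.toEuclideanCLM (𝕜 := ℝ) M := by
  funext y
  ext i
  simp [matVec, Matrix.mulVec, dotProduct]

@[fun_prop]
theorem continuous_matVec (M : Matrix (Fin d) (Fin d) ℝ) : Continuous (matVec M) := by
  rw [matVec_eq_toEuclideanCLM]
  exact ContinuousLinearMap.continuous _

theorem matVec_inv_matVec (hinv : IsUnit S.det) (y : Euc d) : matVec S⁻¹ (matVec S y) = y := by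
  rw [matVec_eq_toEuclideanCLM, matVec_eq_toEuclideanCLM, ← mul_apply_eq_comp,
    ← map_mul, Matrix.nonsing_inv_mul S hinv, map_one, one_apply_eq_self]

theorem matVec_matVec_inv (hinv : IsUnit S.det) (y : Euc d) : matVec S (matVec S⁻¹ y) = y := by
  rw [matVec_eq_toEuclideanCLM, matVec_eq_toEuclideanCLM, ← mul_apply_eq_comp,
    ← map_mul, Matrix.mul_nonsing_inv S hinv, map_one, one_apply_eq_self]

theorem mem_image_matVec_inv_iff (hinv : IsUnit S.det) {A : Set (Euc d)} :
    y ∈ matVec S⁻¹ '' A ↔ matVec S y ∈ A :=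
  ⟨by rintro ⟨w, hw, rfl⟩; rwa [matVec_matVec_inv hinv], fun h => ⟨_, h, matVec_inv_matVec hinv y⟩⟩

theorem sbil_eq_inner (S : Matrix (Fin d) (Fin d) ℝ) (x y : Euc d) :
    Sbil S x y = ⟪x, matVec S y⟫ := by
  simp only [Sbil, matVec, PiLp.inner_apply, RCLike.inner_apply, conj_trivial, Finset.sum_mul]
  exact Finset.sum_congr rfl fun i _ => Finset.sum_congr rfl fun k _ => by ring

theorem sbil_comm (hs : S.IsSymm) (x y : Euc d) : Sbil S x y = Sbil S y x := by
  rw [Sbil, Sbil, Finset.sum_comm]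
  refine Finset.sum_congr rfl fun k _ => Finset.sum_congr rfl fun i _ => ?_
  rw [← hs.apply k i]
  ring

def fitzAffine (S : Matrix (Fin d) (Fin d) ℝ) (y x : Euc d) : ℝ := Sbil S x y - Sbil S y y / 2

theorem fitzAffine_eq (S : Matrix (Fin d) (Fin d) ℝ) (y x : Euc d) :
    fitzAffine S y x = ⟪x, matVec S y⟫ - ⟪y, matVec S y⟫ / 2 := by
  simp only [fitzAffine, sbil_eq_inner]

theorem fitzAffine_add (S : Matrix (Fin d) (Fin d) ℝ) (y x z : Euc d) :
    fitzAffine S y (x + z) = fitzAffine S y x + ⟪z, matVec S y⟫ := by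
  simp only [fitzAffine_eq, inner_add_left]
  ring

theorem fitzAffine_combo (S : Matrix (Fin d) (Fin d) ℝ) (y x₁ x₂ : Euc d) {a b : ℝ}
    (hab : a + b = 1) :
    fitzAffine S y (a • x₁ + b • x₂) = a * fitzAffine S y x₁ + b * fitzAffine S y x₂ := by
  obtain rfl : b = 1 - a := by linarith
  simp only [fitzAffine_eq, inner_add_left, real_inner_smul_left]
  ring

theorem continuous_fitzAffine_left (S : Matrix (Fin d) (Fin d) ℝ) (x : Euc d) :
    Continuous fun y => fitzAffine S y x := by
  simp only [fitzAffine_eq]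
  fun_prop

theorem continuous_fitzAffine_right (S : Matrix (Fin d) (Fin d) ℝ) (y : Euc d) :
    Continuous (fitzAffine S y) := by
  rw [funext (fitzAffine_eq S y)]
  fun_prop

theorem sbil_sub_sub (hs : S.IsSymm) (x y : Euc d) :
    Sbil S (x - y) (x - y) = Sbil S x x - 2 * fitzAffine S y x := by
  have hyx := sbil_comm hs y x
  simp only [fitzAffine, sbil_eq_inner] at hyx ⊢
  rw [matVec_eq_toEuclideanCLM] at hyx ⊢
  simp only [map_sub, inner_sub_left, inner_sub_right]
  linarith

theorem fitzAffine_le_fitz (hy : y ∈ G) (x : Euc d) :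
    (fitzAffine S y x : EReal) ≤ fitz S G x :=
  le_iSup₂ (f := fun y (_ : y ∈ G) => ((fitzAffine S y x : ℝ) : EReal)) y hy

theorem fitz_le {c : EReal} (h : ∀ y ∈ G, (fitzAffine S y x : EReal) ≤ c) : fitz S G x ≤ c :=
  iSup₂_le h

theorem fitz_ne_bot (hGne : G.Nonempty) (x : Euc d) : fitz S G x ≠ ⊥ := by
  obtain ⟨y, hy⟩ := hGne
  exact ne_bot_of_le_ne_bot (EReal.coe_ne_bot _) (fitzAffine_le_fitz (S := S) hy x)

theorem fitz_of_mem (hs : S.IsSymm) (hmono : SMonotone S G) (hx : x ∈ G) :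
    fitz S G x = (Sbil S x x / 2 : ℝ) := by
  refine le_antisymm (fitz_le fun y hy => ?_) ?_
  · have := hmono x hx y hy
    rw [sbil_sub_sub hs] at this
    exact EReal.coe_le_coe_iff.2 (by linarith)
  · convert fitzAffine_le_fitz hx x using 2
    simp only [fitzAffine]
    ring

theorem fitzAffine_le_toRealFun (hGne : G.Nonempty) (hx : x ∈ effDom (fitz S G)) (hy : y ∈ G) :
    fitzAffine S y x ≤ toRealFun (fitz S G) x := by
  rw [← EReal.coe_le_coe_iff, coe_toRealFun (fitz_ne_bot hGne) hx]
  exact fitzAffine_le_fitz hy x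

theorem convexOn_fitz (hGne : G.Nonempty) :
    ConvexOn ℝ (effDom (fitz S G)) (toRealFun (fitz S G)) := by
  have hcombo : ∀ ⦃x₁⦄, x₁ ∈ effDom (fitz S G) → ∀ ⦃x₂⦄, x₂ ∈ effDom (fitz S G) →
      ∀ ⦃a b : ℝ⦄, 0 ≤ a → 0 ≤ b → a + b = 1 → fitz S G (a • x₁ + b • x₂) ≤
        ((a * toRealFun (fitz S G) x₁ + b * toRealFun (fitz S G) x₂ : ℝ) : EReal) :=
    fun x₁ h₁ x₂ h₂ a b ha hb hab => fitz_le fun y hy => by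
      rw [EReal.coe_le_coe_iff, fitzAffine_combo S y x₁ x₂ hab]
      gcongr
      exacts [fitzAffine_le_toRealFun hGne h₁ hy, fitzAffine_le_toRealFun hGne h₂ hy]
  have hdom : Convex ℝ (effDom (fitz S G)) := fun x₁ h₁ x₂ h₂ a b ha hb hab =>
    ne_top_of_le_ne_top (EReal.coe_ne_top _) (hcombo h₁ h₂ ha hb hab)
  refine ⟨hdom, fun x₁ h₁ x₂ h₂ a b ha hb hab => ?_⟩
  rw [← EReal.coe_le_coe_iff, coe_toRealFun (fitz_ne_bot hGne) (hdom h₁ h₂ ha hb hab)]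
  exact hcombo h₁ h₂ ha hb hab

theorem lowerSemicontinuous_fitz : LowerSemicontinuous (fitz S G) :=
  lowerSemicontinuous_biSup fun y _ =>
    (continuous_coe_real_ereal.comp (continuous_fitzAffine_right S y)).lowerSemicontinuous

theorem mem_proj_iff (hs : S.IsSymm) :
    y ∈ proj S G x ↔ y ∈ G ∧ fitz S G x ≤ fitzAffine S y x := by
  refine and_congr_right fun _ => ?_
  rw [fitz, iSup₂_le_iff]
  refine forall₂_congr fun z _ => ?_
  rw [EReal.coe_le_coe_iff, sbil_sub_sub hs, sbil_sub_sub hs]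
  unfold fitzAffine
  constructor <;> intro h <;> linarith

theorem matVec_mem_subdiff_fitz (hy : y ∈ G) (h : fitz S G x ≤ fitzAffine S y x) :
    matVec S y ∈ subdiff (fitz S G) x := fun z =>
  calc ((⟪z, matVec S y⟫ : ℝ) : EReal) + fitz S G x
      ≤ ((⟪z, matVec S y⟫ : ℝ) : EReal) + (fitzAffine S y x : EReal) := by gcongr
    _ = (fitzAffine S y (x + z) : EReal) := by rw [fitzAffine_add, add_comm, EReal.coe_add]
    _ ≤ fitz S G (x + z) := fitzAffine_le_fitz hy _

theorem fitz_le_of_matVec_mem_subdiff (hs : S.IsSymm) (hmono : SMonotone S G) (hy : y ∈ G)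
    (h : matVec S y ∈ subdiff (fitz S G) x) : fitz S G x ≤ fitzAffine S y x := by
  have hGne : G.Nonempty := ⟨y, hy⟩
  have hyD : y ∈ effDom (fitz S G) := by simp [effDom, fitz_of_mem hs hmono hy]
  have hx := mem_effDom_of_mem_subdiff h hyD
  have hFy : toRealFun (fitz S G) y = Sbil S y y / 2 := by
    simp [toRealFun, fitz_of_mem hs hmono hy]
  have := (mem_subdiff_iff (fitz_ne_bot hGne) hx).1 h y hyD
  rw [hFy, inner_sub_left, ← sbil_eq_inner, ← sbil_eq_inner] at this
  rw [← coe_toRealFun (fitz_ne_bot hGne) hx, EReal.coe_le_coe_iff, fitzAffine]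
  linarith

theorem proj_eq_image_subdiff_inter (hs : S.IsSymm) (hinv : IsUnit S.det)
    (hmono : SMonotone S G) (x : Euc d) :
    proj S G x = matVec S⁻¹ '' subdiff (fitz S G) x ∩ G := by
  ext y
  rw [mem_inter_iff, mem_image_matVec_inv_iff hinv, mem_proj_iff hs]
  exact ⟨fun ⟨hy, h⟩ => ⟨matVec_mem_subdiff_fitz hy h, hy⟩,
    fun ⟨h, hy⟩ => ⟨hy, fitz_le_of_matVec_mem_subdiff hs hmono hy h⟩⟩

theorem fitz_eq_fconj (hs : S.IsSymm) (hmono : SMonotone S G) (hx : x ∈ G) :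
    fitz S G x = fconj (fitz S G) (matVec S x) := by
  rw [fitz_of_mem hs hmono hx]
  refine le_antisymm ?_ (iSup_le fun z => ?_)
  · refine le_iSup_of_le x ?_
    rw [fitz_of_mem hs hmono hx, ← sbil_eq_inner, ← EReal.coe_sub]
    exact EReal.coe_le_coe_iff.2 (by linarith)
  · calc ((⟪z, matVec S x⟫ : ℝ) : EReal) - fitz S G z
        ≤ ((⟪z, matVec S x⟫ : ℝ) : EReal) - (fitzAffine S x z : EReal) :=
          EReal.sub_le_sub le_rfl (fitzAffine_le_fitz hx z)
      _ = (Sbil S x x / 2 : ℝ) := by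
          rw [← EReal.coe_sub, fitzAffine, sbil_eq_inner S z x]
          congr 1
          ring

theorem proj_nonempty_of_mem_interior (hs : S.IsSymm) (hinv : IsUnit S.det) (hGc : IsClosed G)
    (hGne : G.Nonempty) (hx : x ∈ interior (effDom (fitz S G))) : (proj S G x).Nonempty := by
  set c := toRealFun (fitz S G) x
  obtain ⟨r, hr, M, hball, hM⟩ := (convexOn_fitz hGne).exists_forall_closedBall_le hx
  set K := {y ∈ G | c - 1 ≤ fitzAffine S y x}
  have hKne : K.Nonempty := by
    have : ((c - 1 : ℝ) : EReal) < fitz S G x := by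
      rw [← coe_toRealFun (fitz_ne_bot hGne) (interior_subset hx), EReal.coe_lt_coe_iff]
      linarith
    obtain ⟨y, hy, hlt⟩ := lt_biSup_iff.1 this
    exact ⟨y, hy, (EReal.coe_lt_coe_iff.1 hlt).le⟩
  have hSy : ∀ y ∈ K, r * ‖matVec S y‖ ≤ M - (c - 1) := fun y hy =>
    mul_norm_le_of_forall_inner_le hr.le fun ζ hζ => by
      have hmem : x + ζ ∈ closedBall x r := by
        rwa [mem_closedBall, dist_eq_norm, add_sub_cancel_left]
      have := fitzAffine_le_toRealFun hGne (interior_subset (hball hmem)) hy.1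
      rw [fitzAffine_add] at this
      linarith [hM _ hmem, hy.2]
  have hKbdd : Bornology.IsBounded K := by
    refine isBounded_iff_forall_norm_le.2
      ⟨‖Matrix.toEuclideanCLM (𝕜 := ℝ) S⁻¹‖ * ((M - (c - 1)) / r), fun y hy => ?_⟩
    calc ‖y‖ = ‖Matrix.toEuclideanCLM (𝕜 := ℝ) S⁻¹ (matVec S y)‖ := by
          rw [← matVec_eq_toEuclideanCLM, matVec_inv_matVec hinv]
      _ ≤ ‖Matrix.toEuclideanCLM (𝕜 := ℝ) S⁻¹‖ * ‖matVec S y‖ := ContinuousLinearMap.le_opNorm _ _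
      _ ≤ _ := by gcongr; rw [le_div_iff₀ hr, mul_comm]; exact hSy y hy
  have hKc : IsClosed K := hGc.inter (isClosed_le continuous_const (continuous_fitzAffine_left S x))
  obtain ⟨y, hyK, hmax⟩ := (isCompact_of_isClosed_isBounded hKc hKbdd).exists_isMaxOn hKne
    (continuous_fitzAffine_left S x).continuousOn
  refine ⟨y, (mem_proj_iff hs).2 ⟨hyK.1, fitz_le fun z hz => EReal.coe_le_coe_iff.2 ?_⟩⟩
  by_cases hzK : c - 1 ≤ fitzAffine S z x
  · exact hmax ⟨hz, hzK⟩
  · linarith [hyK.2]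

theorem matVec_inv_gradient_mem (hs : S.IsSymm) (hinv : IsUnit S.det) (hGc : IsClosed G)
    (hGne : G.Nonempty) (hx : x ∈ domGrad (fitz S G)) :
    matVec S⁻¹ (gradient (toRealFun (fitz S G)) x) ∈ G := by
  obtain ⟨y, hy⟩ := proj_nonempty_of_mem_interior hs hinv hGc hGne hx.1
  obtain ⟨hyG, hyx⟩ := (mem_proj_iff hs).1 hy
  rwa [← eq_gradient_of_mem_subdiff (fitz_ne_bot hGne) hx (matVec_mem_subdiff_fitz hyG hyx),
    matVec_inv_matVec hinv]

theorem proj_nonempty_of_mem_subdiff (hs : S.IsSymm) (hinv : IsUnit S.det) (hGc : IsClosed G)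
    (hGne : G.Nonempty) (hmono : SMonotone S G) (hD : (interior (effDom (fitz S G))).Nonempty)
    {w : Euc d} (hw : w ∈ subdiff (fitz S G) x) : (proj S G x).Nonempty := by
  obtain ⟨u, v, hu, hux, hv⟩ :=
    exists_tendsto_gradient_of_mem_subdiff (fitz_ne_bot hGne) (convexOn_fitz hGne) hD hw
  have hvG : matVec S⁻¹ v ∈ G := hGc.mem_of_tendsto (((continuous_matVec S⁻¹).tendsto v).comp hv)
    (Eventually.of_forall fun n => matVec_inv_gradient_mem hs hinv hGc hGne (hu n))
  have hvsub := mem_subdiff_of_tendsto_gradient (fitz_ne_bot hGne) (convexOn_fitz hGne)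
    lowerSemicontinuous_fitz hu hux hv
  rw [proj_eq_image_subdiff_inter hs hinv hmono]
  exact ⟨_, ⟨v, hvsub, rfl⟩, hvG⟩

end Fitzpatrick

/-- Lemma 6 of the paper. -/
theorem stmt12 {d : ℕ} (S : Matrix (Fin d) (Fin d) ℝ)
    (hsymm : S.IsSymm) (hinv : IsUnit S.det)
    (G : Set (Euc d)) (hGc : IsClosed G) (hGne : G.Nonempty)
    (hmono : SMonotone S G)
    (hD : (interior (effDom (fitz S G))).Nonempty) :
    matVec S⁻¹ '' gradRange (fitz S G) ⊆ G ∧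
    {x | (proj S G x).Nonempty} =
      {x | (matVec S⁻¹ '' subdiff (fitz S G) x).Nonempty} ∧
    {x | (matVec S⁻¹ '' subdiff (fitz S G) x).Nonempty} =
      {x | (matVec S⁻¹ '' clarke (fitz S G) x).Nonempty} ∧
    (∀ x ∈ G, fitz S G x = fconj (fitz S G) (matVec S x) ∧
      fitz S G x = ((Sbil S x x / 2 : ℝ) : EReal)) ∧
    ∀ x : Euc d, proj S G x = (matVec S⁻¹ '' subdiff (fitz S G) x) ∩ G := by
  have hproj := proj_eq_image_subdiff_inter hsymm hinv hmono
  refine ⟨?_, Set.ext fun x => ?_, Set.ext fun x => ?_,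
    fun x hx => ⟨fitz_eq_fconj hsymm hmono hx, fitz_of_mem hsymm hmono hx⟩, hproj⟩
  · rintro _ ⟨_, ⟨u, hu, rfl⟩, rfl⟩
    exact matVec_inv_gradient_mem hsymm hinv hGc hGne hu
  · refine ⟨fun ⟨y, hy⟩ => ?_, fun ⟨_, w, hw, _⟩ =>
      proj_nonempty_of_mem_subdiff hsymm hinv hGc hGne hmono hD hw⟩
    rw [hproj] at hy
    exact ⟨y, hy.1⟩
  · simp only [mem_ofPred_eq, image_nonempty]
    exact (clarke_nonempty_iff (fitz_ne_bot hGne) (convexOn_fitz hGne) lowerSemicontinuous_fitz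
      hD).symm

end
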